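/- Define d : [ρ_A, ∞) → ℝ by d(ρ) = ρ³/(ρ³ + 3ρ² + 3ρ + 8) for ρ_A ≤ ρ < ρ_B, d(ρ) = 3ρ²/(5ρ² + 7ρ + 3) for ρ_B ≤ ρ < ρ_C, d(ρ) = 9ρ/(16ρ + 20) for ρ_C ≤ ρ < 4, and d(ρ) = 3/7 for ρ ≥ 4, where ρ_A is the unique positive root of 2ρ³ − 3ρ² − 3ρ − 8 = 0, ρ_B is the unique positive root of ρ³ − ρ² − 3ρ − 12 = 0, and ρ_C = (1 + √37)/2. Define p on (ρ_A, ∞) by p(ρ) = 1/3 for ρ_A < ρ < 3, p(ρ) = 3/8 for 3 ≤ ρ < 4, and p(ρ) = 2/5 for ρ ≥ 4. Then d(ρ) > p(ρ) for every ρ > ρ_A. -/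

import Mathlib

/-!
Since `3ρ³ - (ρ³ + 3ρ² + 3ρ + 8) = 2ρ³ - 3ρ² - 3ρ - 8`, the first piece of `d` exceeds `1/3`
exactly beyond the root `ρ_A`. From `ρ = 3` on, every piece of `d` exceeds `3/8`, and `3/7 > 2/5`.
The identities `2x³ - 3x² - 3x - 8 = 2(x - 5/2)(x² + x + 1) - 3` and
`x³ - x² - 3x - 12 = (x - 3)(x² + 2x + 3) - 3` show that `ρ_A > 5/2`, that the first cubic is
positive beyond `ρ_A`, and that `ρ_B > 3`; with `ρ_C > 3` this fixes the piece of `p` on each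
piece of `d`.
-/

lemma five_halves_lt_of_cubicA_eq_zero {x : ℝ} (hx : 2 * x ^ 3 - 3 * x ^ 2 - 3 * x - 8 = 0) :
    5 / 2 < x := by
  have hfactor : (x - 5 / 2) * (x ^ 2 + x + 1) = 3 / 2 := by linear_combination hx / 2
  by_contra! hle
  nlinarith [mul_nonpos_of_nonpos_of_nonneg (sub_nonpos.mpr hle)
    (by nlinarith [sq_nonneg (x + 1 / 2)] : (0 : ℝ) ≤ x ^ 2 + x + 1)]

lemma three_lt_of_cubicB_eq_zero {x : ℝ} (hx : x ^ 3 - x ^ 2 - 3 * x - 12 = 0) : 3 < x := by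
  have hfactor : (x - 3) * (x ^ 2 + 2 * x + 3) = 3 := by linear_combination hx
  by_contra! hle
  nlinarith [mul_nonpos_of_nonpos_of_nonneg (sub_nonpos.mpr hle)
    (by nlinarith [sq_nonneg (x + 1)] : (0 : ℝ) ≤ x ^ 2 + 2 * x + 3)]

lemma cubicA_pos_of_root_lt {a x : ℝ} (ha : 2 * a ^ 3 - 3 * a ^ 2 - 3 * a - 8 = 0) (hax : a < x) :
    0 < 2 * x ^ 3 - 3 * x ^ 2 - 3 * x - 8 := by
  have ha' := five_halves_lt_of_cubicA_eq_zero ha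
  nlinarith [mul_lt_mul'' (sub_lt_sub_right hax (5 / 2))
    (by nlinarith : a ^ 2 + a + 1 < x ^ 2 + x + 1) (by linarith) (by positivity)]

lemma one_third_lt_of_cubicA_root_lt {a ρ : ℝ} (ha : 2 * a ^ 3 - 3 * a ^ 2 - 3 * a - 8 = 0)
    (haρ : a < ρ) : 1 / 3 < ρ ^ 3 / (ρ ^ 3 + 3 * ρ ^ 2 + 3 * ρ + 8) := by
  have hρ : 0 < ρ := by linarith [five_halves_lt_of_cubicA_eq_zero ha]
  rw [div_lt_div_iff₀ (by norm_num) (by positivity)]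
  linarith [cubicA_pos_of_root_lt ha haρ]

lemma three_eighths_lt_cube_div {ρ : ℝ} (hρ : 3 ≤ ρ) :
    3 / 8 < ρ ^ 3 / (ρ ^ 3 + 3 * ρ ^ 2 + 3 * ρ + 8) := by
  rw [div_lt_div_iff₀ (by norm_num) (by positivity)]
  nlinarith [mul_nonneg (sub_nonneg.mpr hρ) (sub_nonneg.mpr hρ)]

lemma three_eighths_lt_sq_div {ρ : ℝ} (hρ : 3 ≤ ρ) :
    3 / 8 < 3 * ρ ^ 2 / (5 * ρ ^ 2 + 7 * ρ + 3) := by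
  rw [div_lt_div_iff₀ (by norm_num) (by positivity)]
  nlinarith

lemma three_eighths_lt_linear_div {ρ : ℝ} (hρ : 3 ≤ ρ) : 3 / 8 < 9 * ρ / (16 * ρ + 20) := by
  rw [div_lt_div_iff₀ (by norm_num) (by positivity)]
  linarith

lemma three_lt_one_add_sqrt_thirty_seven_div_two : 3 < (1 + Real.sqrt 37) / 2 := by
  have : 5 < Real.sqrt 37 := by
    rw [Real.lt_sqrt (by norm_num)]
    norm_num
  linarith

theorem stmt_9_general (ρA ρB ρC : ℝ) (d p : ℝ → ℝ)
    (hAroot : 2 * ρA ^ 3 - 3 * ρA ^ 2 - 3 * ρA - 8 = 0)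
    (hBroot : ρB ^ 3 - ρB ^ 2 - 3 * ρB - 12 = 0)
    (hC : ρC = (1 + Real.sqrt 37) / 2)
    (hd1 : ∀ ρ : ℝ, ρA ≤ ρ → ρ < ρB →
      d ρ = ρ ^ 3 / (ρ ^ 3 + 3 * ρ ^ 2 + 3 * ρ + 8))
    (hd2 : ∀ ρ : ℝ, ρB ≤ ρ → ρ < ρC →
      d ρ = 3 * ρ ^ 2 / (5 * ρ ^ 2 + 7 * ρ + 3))
    (hd3 : ∀ ρ : ℝ, ρC ≤ ρ → ρ < 4 → d ρ = 9 * ρ / (16 * ρ + 20))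
    (hd4 : ∀ ρ : ℝ, 4 ≤ ρ → d ρ = 3 / 7)
    (hp1 : ∀ ρ : ℝ, ρA < ρ → ρ < 3 → p ρ = 1 / 3)
    (hp2 : ∀ ρ : ℝ, 3 ≤ ρ → ρ < 4 → p ρ = 3 / 8)
    (hp3 : ∀ ρ : ℝ, 4 ≤ ρ → p ρ = 2 / 5) :
    ∀ ρ : ℝ, ρA < ρ → d ρ > p ρ := by
  intro ρ hAρ
  have hB3 : 3 < ρB := three_lt_of_cubicB_eq_zero hBroot
  have hC3 : 3 < ρC := hC ▸ three_lt_one_add_sqrt_thirty_seven_div_two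
  rcases lt_or_ge ρ 4 with h4 | h4
  · rcases lt_or_ge ρ ρC with hρC | hρC
    · rcases lt_or_ge ρ ρB with hρB | hρB
      · rw [hd1 ρ hAρ.le hρB]
        rcases lt_or_ge ρ 3 with h3 | h3
        · rw [hp1 ρ hAρ h3]
          exact one_third_lt_of_cubicA_root_lt hAroot hAρ
        · rw [hp2 ρ h3 h4]
          exact three_eighths_lt_cube_div h3
      · rw [hd2 ρ hρB hρC, hp2 ρ (by linarith) h4]
        exact three_eighths_lt_sq_div (by linarith)
    · rw [hd3 ρ hρC h4, hp2 ρ (by linarith) h4]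
      exact three_eighths_lt_linear_div (by linarith)
  · rw [hd4 ρ h4, hp3 ρ h4]
    norm_num

/-- With `ρ_A, ρ_B` the unique positive roots of `2ρ³ − 3ρ² − 3ρ − 8 = 0` and
`ρ³ − ρ² − 3ρ − 12 = 0`, `ρ_C = (1 + √37)/2`, `d` the paper's piecewise DoF inner bound
on `[ρ_A, ∞)`, and `p` the best previous inner bound, we have `d(ρ) > p(ρ)` for all
`ρ > ρ_A`. -/
theorem stmt_9 (ρA ρB ρC : ℝ) (d p : ℝ → ℝ)
    (hApos : 0 < ρA) (hAroot : 2 * ρA ^ 3 - 3 * ρA ^ 2 - 3 * ρA - 8 = 0)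
    (hAuniq : ∀ x : ℝ, 0 < x → 2 * x ^ 3 - 3 * x ^ 2 - 3 * x - 8 = 0 → x = ρA)
    (hBpos : 0 < ρB) (hBroot : ρB ^ 3 - ρB ^ 2 - 3 * ρB - 12 = 0)
    (hBuniq : ∀ x : ℝ, 0 < x → x ^ 3 - x ^ 2 - 3 * x - 12 = 0 → x = ρB)
    (hC : ρC = (1 + Real.sqrt 37) / 2)
    (hd1 : ∀ ρ : ℝ, ρA ≤ ρ → ρ < ρB →
      d ρ = ρ ^ 3 / (ρ ^ 3 + 3 * ρ ^ 2 + 3 * ρ + 8))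
    (hd2 : ∀ ρ : ℝ, ρB ≤ ρ → ρ < ρC →
      d ρ = 3 * ρ ^ 2 / (5 * ρ ^ 2 + 7 * ρ + 3))
    (hd3 : ∀ ρ : ℝ, ρC ≤ ρ → ρ < 4 → d ρ = 9 * ρ / (16 * ρ + 20))
    (hd4 : ∀ ρ : ℝ, 4 ≤ ρ → d ρ = 3 / 7)
    (hp1 : ∀ ρ : ℝ, ρA < ρ → ρ < 3 → p ρ = 1 / 3)
    (hp2 : ∀ ρ : ℝ, 3 ≤ ρ → ρ < 4 → p ρ = 3 / 8)
    (hp3 : ∀ ρ : ℝ, 4 ≤ ρ → p ρ = 2 / 5) :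
    ∀ ρ : ℝ, ρA < ρ → d ρ > p ρ :=
  stmt_9_general ρA ρB ρC d p hAroot hBroot hC hd1 hd2 hd3 hd4 hp1 hp2 hp3
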